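/- arXiv:1711.02461 — 8 statements merged into one kernel-verified Lean document; each statement's English description precedes it below -/
import Mathlib

section
/- Let [a_1,...,a_n] = p_n/q_n in lowest terms (p_n, q_n given by the standard convergent recursions). Then the palindromification satisfies [a_n,...,a_2,a_1,a_1,a_2,...,a_n] = (p_n² + q_n²)/(p_{n-1} p_n + q_{n-1} q_n), and this fraction is in lowest terms. -/
/-- Value of the continued fraction [a₁,...,aₙ] = a₁ + 1/(a₂ + 1/(... + 1/aₙ)). -/
def cfQ : List ℚ → ℚ
  | [] => 0
  | [a] => a
  | a :: b :: l => a + 1 / cfQ (b :: l)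

/-- The continuant: `cont [a₁,...,aₙ]` is the numerator N[a₁,...,aₙ] of the
continued fraction [a₁,...,aₙ], with N[] = 1. -/
def cont : List ℕ → ℕ
  | [] => 1
  | [a] => a
  | a :: b :: l => a * cont (b :: l) + cont l

/-- `contD [a₁,...,aₙ]` is the denominator of the continued fraction
[a₁,...,aₙ], i.e. N[a₂,...,aₙ], with the convention that the empty
continued fraction has denominator 0. -/
def contD : List ℕ → ℕ
  | [] => 0
  | _ :: l => cont l

/-!
Continuants multiply like the matrices `!![a, 1; 1, 0]`, so
`N[A ++ B] = N[A] N[B] + N[A.dropLast] N[B.tail]`, and they are invariant under reversal.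
Applied to `A = l.reverse`, `B = l` this gives numerator `pₙ² + qₙ²` and denominator
`pₙ₋₁pₙ + qₙ₋₁qₙ` for the palindrome. Lowest terms follows from the determinant identity
`pₙqₙ₋₁ - pₙ₋₁qₙ = ±1`, applied to the palindrome itself.
-/

@[simp] lemma cont_nil : cont [] = 1 := rfl

@[simp] lemma contD_nil : contD [] = 0 := rfl

@[simp] lemma contD_cons (a : ℕ) (l : List ℕ) : contD (a :: l) = cont l := rfl

lemma cont_cons (a : ℕ) (l : List ℕ) : cont (a :: l) = a * cont l + contD l := by
  cases l <;> simp [cont]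

lemma contD_eq_cont_tail {l : List ℕ} (hl : l ≠ []) : contD l = cont l.tail := by
  cases l with
  | nil => exact absurd rfl hl
  | cons a t => rfl

lemma cont_pos {l : List ℕ} (hpos : ∀ x ∈ l, 0 < x) : 0 < cont l := by
  induction l with
  | nil => simp
  | cons a l ih =>
    rw [cont_cons]
    have := hpos a List.mem_cons_self
    have := ih fun x hx => hpos x (List.mem_cons_of_mem a hx)
    positivity

lemma cont_contD_append {A : List ℕ} (hA : A ≠ []) (B : List ℕ) :
    cont (A ++ B) = cont A * cont B + cont A.dropLast * contD B ∧
      contD (A ++ B) = contD A * cont B + contD A.dropLast * contD B := by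
  induction A with
  | nil => exact absurd rfl hA
  | cons a A ih =>
    cases A with
    | nil => simp [cont_cons]
    | cons b A =>
      obtain ⟨hcont, hcontD⟩ := ih (List.cons_ne_nil b A)
      have hdrop : (a :: b :: A).dropLast = a :: (b :: A).dropLast := rfl
      refine ⟨?_, by rw [List.cons_append, hdrop, contD_cons, contD_cons, contD_cons, hcont]⟩
      rw [List.cons_append, cont_cons a, hcont, hcontD, hdrop, cont_cons a (b :: A),
        cont_cons a (b :: A).dropLast]
      ring

lemma cont_reverse (l : List ℕ) : cont l.reverse = cont l := by
  induction l using cont.induct with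
  | case1 => rfl
  | case2 a => rfl
  | case3 a b l ih_tail ih_tail_tail =>
    rw [List.reverse_cons, (cont_contD_append (by simp) [a]).1, List.dropLast_reverse,
      List.tail_cons, ih_tail, ih_tail_tail, cont_cons a (b :: l), contD_cons]
    simp only [cont, mul_one, contD_cons, Nat.add_right_cancel_iff]
    ring

lemma contD_reverse {l : List ℕ} (hl : l ≠ []) : contD l.reverse = cont l.dropLast := by
  rw [contD_eq_cont_tail (List.reverse_ne_nil_iff.mpr hl), List.tail_reverse, cont_reverse]

lemma contD_tail_reverse (l : List ℕ) : contD l.tail.reverse = contD l.dropLast := by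
  rcases l with _ | ⟨a, _ | ⟨b, l⟩⟩
  · rfl
  · rfl
  · rw [List.tail_cons, contD_reverse (List.cons_ne_nil b l), List.dropLast_cons_of_ne_nil
      (List.cons_ne_nil b l), contD_cons]

lemma cont_mul_contD_dropLast_sub {l : List ℕ} (hl : l ≠ []) :
    (cont l : ℤ) * contD l.dropLast - cont l.dropLast * contD l = (-1) ^ l.length := by
  induction l using cont.induct with
  | case1 => exact absurd rfl hl
  | case2 a => simp [cont]
  | case3 a b l ih _ =>
    have hdrop : (a :: b :: l).dropLast = a :: (b :: l).dropLast := rfl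
    rw [hdrop, cont_cons a (b :: l), contD_cons a (b :: l).dropLast,
      cont_cons a (b :: l).dropLast, contD_cons a (b :: l), List.length_cons, pow_succ]
    push_cast
    linear_combination (-1 : ℤ) * ih (List.cons_ne_nil b l)

lemma coprime_cont_contD {l : List ℕ} (hl : l ≠ []) : Nat.Coprime (cont l) (contD l) := by
  rw [← Nat.isCoprime_iff_coprime]
  refine ⟨(-1) ^ l.length * contD l.dropLast, -(-1) ^ l.length * cont l.dropLast, ?_⟩
  have hsign : ((-1 : ℤ) ^ l.length) ^ 2 = 1 := by
    rw [← pow_mul, mul_comm, pow_mul, neg_one_sq, one_pow]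
  linear_combination (-1 : ℤ) ^ l.length * cont_mul_contD_dropLast_sub hl + hsign

lemma cfQ_map_natCast {l : List ℕ} (hpos : ∀ x ∈ l, 0 < x) :
    cfQ (l.map (fun x => (x : ℚ))) = (cont l : ℚ) / contD l := by
  induction l using cont.induct with
  | case1 => simp [cfQ]
  | case2 a => simp [cfQ, cont]
  | case3 a b l ih _ =>
    have hb : ∀ x ∈ b :: l, 0 < x := fun x hx => hpos x (List.mem_cons_of_mem a hx)
    have hcont : (cont (b :: l) : ℚ) ≠ 0 := by exact_mod_cast (cont_pos hb).ne'
    change (a : ℚ) + 1 / cfQ ((b :: l).map (fun x => (x : ℚ))) = _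
    rw [ih hb, one_div_div, cont_cons a (b :: l), contD_cons, contD_cons]
    push_cast
    field_simp

/-- If [a₁,...,aₙ] = pₙ/qₙ, then
[aₙ,...,a₂,a₁,a₁,a₂,...,aₙ] = (pₙ² + qₙ²)/(pₙ₋₁pₙ + qₙ₋₁qₙ), in lowest terms.
Here pₙ = cont l, qₙ = contD l, pₙ₋₁ = cont l.dropLast, qₙ₋₁ = contD l.dropLast. -/
theorem stmt3 (l : List ℕ) (hl : l ≠ []) (hpos : ∀ x ∈ l, 0 < x) :
    cfQ ((l.reverse ++ l).map (fun x => (x : ℚ))) =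
      ((cont l : ℚ) ^ 2 + (contD l : ℚ) ^ 2) /
        ((cont l.dropLast : ℚ) * (cont l : ℚ) + (contD l.dropLast : ℚ) * (contD l : ℚ)) ∧
    Nat.Coprime ((cont l) ^ 2 + (contD l) ^ 2)
      ((cont l.dropLast) * (cont l) + (contD l.dropLast) * (contD l)) := by
  have hrev : l.reverse ≠ [] := List.reverse_ne_nil_iff.mpr hl
  have hpal : l.reverse ++ l ≠ [] := List.append_ne_nil_of_right_ne_nil _ hl
  have hnum : cont (l.reverse ++ l) = cont l ^ 2 + contD l ^ 2 := by
    rw [(cont_contD_append hrev l).1, List.dropLast_reverse, cont_reverse, cont_reverse,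
      ← contD_eq_cont_tail hl, sq, sq]
  have hden : contD (l.reverse ++ l) = cont l.dropLast * cont l + contD l.dropLast * contD l := by
    rw [(cont_contD_append hrev l).2, List.dropLast_reverse, contD_reverse hl,
      contD_tail_reverse]
  constructor
  · rw [cfQ_map_natCast fun x hx => hpos x (by simpa using hx), hnum, hden]
    push_cast
    rfl
  · simpa only [hnum, hden] using coprime_cont_contD hpal
end

section
/- If N is a sum of two relatively prime squares, N = p² + q² with p > q ≥ 1 and gcd(p,q) = 1, then there exists a palindromic sequence of positive integers of even length whose continued fraction has numerator N. -/
namespace CFAux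

open Matrix

/-- The matrix product associated to a continued fraction. -/
def M (l : List ℕ) : Matrix (Fin 2) (Fin 2) ℕ :=
  (l.map fun a => !![a, 1; 1, 0]).prod

/-- Numerator (continuant). -/
def num (l : List ℕ) : ℕ := M l 0 0

/-- Denominator. -/
def den (l : List ℕ) : ℕ := M l 1 0

@[simp] lemma M_nil : M [] = 1 := rfl

@[simp] lemma M_cons (a : ℕ) (l : List ℕ) : M (a :: l) = !![a, 1; 1, 0] * M l := by
  simp [M]

lemma M_append (u v : List ℕ) : M (u ++ v) = M u * M v := by
  simp [M]

@[simp] lemma num_nil : num [] = 1 := rfl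
@[simp] lemma den_nil : den [] = 0 := rfl

lemma num_cons (a : ℕ) (l : List ℕ) : num (a :: l) = a * num l + den l := by
  simp [num, den, Matrix.mul_apply, Fin.sum_univ_two]

lemma den_cons (a : ℕ) (l : List ℕ) : den (a :: l) = num l := by
  simp [num, den, Matrix.mul_apply, Fin.sum_univ_two]

lemma coprime (l : List ℕ) : Nat.Coprime (num l) (den l) := by
  induction l with
  | nil => simp [Nat.Coprime]
  | cons a l ih =>
    rw [num_cons, den_cons, add_comm, mul_comm]
    exact (Nat.coprime_add_mul_left_left (den l) (num l) a).mpr ih.symm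

lemma M_reverse (l : List ℕ) : M l.reverse = (M l)ᵀ := by
  rw [M, M, Matrix.transpose_list_prod, List.map_reverse]
  congr 1
  congr 1
  rw [List.map_map]
  apply List.map_congr_left
  intro a _
  ext i j
  fin_cases i <;> fin_cases j <;> simp

lemma num_rev_append (u : List ℕ) : num (u.reverse ++ u) = num u ^ 2 + den u ^ 2 := by
  rw [num, M_append, M_reverse, Matrix.mul_apply, Fin.sum_univ_two]
  simp only [Matrix.transpose_apply, num, den, sq]

/-- Value of the continued fraction. -/
lemma cfQ_eq (l : List ℕ) (hne : l ≠ []) (hpos : ∀ x ∈ l, 0 < x) :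
    cfQ (l.map fun x => (x : ℚ)) = (num l : ℚ) / (den l : ℚ) ∧ 0 < num l ∧ 0 < den l := by
  induction l with
  | nil => exact absurd rfl hne
  | cons a l ih =>
    have ha : 0 < a := hpos a (by simp)
    cases l with
    | nil =>
      refine ⟨?_, ?_, ?_⟩
      · show cfQ [(a : ℚ)] = _
        rw [cfQ, num_cons, den_cons, num_nil, den_nil]
        simp
      · simpa [num_cons, den_cons] using ha
      · simp [den_cons]
    | cons b l =>
      obtain ⟨hval, hn, hd⟩ := ih (by simp) (fun x hx => hpos x (List.mem_cons_of_mem a hx))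
      have hnQ : (0 : ℚ) < (num (b :: l) : ℚ) := by exact_mod_cast hn
      have hdQ : (0 : ℚ) < (den (b :: l) : ℚ) := by exact_mod_cast hd
      refine ⟨?_, ?_, ?_⟩
      · show (a : ℚ) + 1 / cfQ ((b : ℚ) :: l.map fun x => (x : ℚ)) = _
        have : cfQ (((b : ℕ) : ℚ) :: l.map fun x => (x : ℚ)) =
            (num (b :: l) : ℚ) / (den (b :: l) : ℚ) := hval
        rw [this, one_div_div, num_cons a (b :: l), den_cons a (b :: l)]
        push_cast
        rw [add_div, mul_div_cancel_right₀ _ hnQ.ne']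
      · rw [num_cons]
        have := Nat.one_le_iff_ne_zero.mpr ha.ne'
        nlinarith
      · rw [den_cons]; exact hn

/-- Existence of a continued fraction expansion of p/q. -/
lemma exists_expansion : ∀ q : ℕ, ∀ p : ℕ, 1 ≤ q → q < p → Nat.Coprime p q →
    ∃ u : List ℕ, u ≠ [] ∧ (∀ x ∈ u, 0 < x) ∧ num u = p ∧ den u = q := by
  intro q
  induction q using Nat.strong_induction_on with
  | _ q ih =>
    intro p hq hpq hcop
    rcases eq_or_lt_of_le hq with h1 | h1
    · refine ⟨[p], by simp, ?_, ?_, ?_⟩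
      · intro x hx; simp at hx; omega
      · simp [num_cons]
      · rw [den_cons, num_nil, h1]
    · -- q ≥ 2
      set r := p % q with hr
      set a := p / q with ha
      have hqpos : 0 < q := hq
      have hrlt : r < q := Nat.mod_lt _ hqpos
      have hrpos : 0 < r := by
        rcases Nat.eq_zero_or_pos r with h0 | h0
        · exfalso
          have : q ∣ p := Nat.dvd_of_mod_eq_zero h0
          have hq1 : q = 1 := Nat.dvd_one.mp (hcop ▸ Nat.dvd_gcd this dvd_rfl)
          omega
        · exact h0
      have hcop' : Nat.Coprime q r := by
        unfold Nat.Coprime at hcop ⊢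
        rw [hr, Nat.gcd_comm, ← Nat.gcd_rec, Nat.gcd_comm]
        exact hcop
      obtain ⟨u, hune, hupos, hnum, hden⟩ := ih r hrlt q hrpos hrlt hcop'
      have hap : 0 < a := Nat.div_pos (le_of_lt hpq) hqpos
      refine ⟨a :: u, by simp, ?_, ?_, ?_⟩
      · intro x hx
        rcases List.mem_cons.mp hx with h | h
        · exact h ▸ hap
        · exact hupos x h
      · rw [num_cons, hnum, hden, ha, hr, mul_comm]
        exact (Nat.div_add_mod p q)
      · rw [den_cons, hnum]

end CFAux

/-- If N is a sum of two relatively prime squares, then there exists a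
palindromic sequence of positive integers of even length whose continued
fraction has numerator N. -/
theorem stmt5 (N p q : ℕ) (hq : 1 ≤ q) (hpq : q < p) (hcop : Nat.Coprime p q)
    (hN : N = p ^ 2 + q ^ 2) :
    ∃ b : List ℕ, b ≠ [] ∧ Even b.length ∧ (∀ x ∈ b, 0 < x) ∧
      b.reverse = b ∧ (cfQ (b.map (fun x => (x : ℚ)))).num = N := by
  obtain ⟨u, hune, hupos, hnum, hden⟩ := CFAux.exists_expansion q p hq hpq hcop
  refine ⟨u.reverse ++ u, ?_, ?_, ?_, ?_, ?_⟩
  · simp [hune]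
  · rw [List.length_append, List.length_reverse]
    exact ⟨u.length, by ring⟩
  · intro x hx
    rcases List.mem_append.mp hx with h | h
    · exact hupos x (List.mem_reverse.mp h)
    · exact hupos x h
  · rw [List.reverse_append, List.reverse_reverse]
  · have hposb : ∀ x ∈ u.reverse ++ u, 0 < x := by
      intro x hx
      rcases List.mem_append.mp hx with h | h
      · exact hupos x (List.mem_reverse.mp h)
      · exact hupos x h
    obtain ⟨hval, hn, hd⟩ := CFAux.cfQ_eq (u.reverse ++ u) (by simp [hune]) hposb
    rw [hval]
    have hc := CFAux.coprime (u.reverse ++ u)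
    have : ((CFAux.num (u.reverse ++ u) : ℤ) / (CFAux.den (u.reverse ++ u) : ℤ) : ℚ).num
        = (CFAux.num (u.reverse ++ u) : ℤ) := by
      apply Rat.num_div_eq_of_coprime
      · exact_mod_cast hd
      · simpa using hc
    rw [show ((CFAux.num (u.reverse ++ u) : ℚ) / (CFAux.den (u.reverse ++ u) : ℚ))
        = (((CFAux.num (u.reverse ++ u) : ℤ) : ℚ) / ((CFAux.den (u.reverse ++ u) : ℤ) : ℚ)) by
        push_cast; ring, this]
    rw [CFAux.num_rev_append, hnum, hden, hN]
end

section
/- The greatest common divisor of p_n² − r_n² and p_{n-1} p_n − r_{n-1} r_n is a_1, where p_n/q_n = [a_1,...,a_n] and q_n/r_n = [a_2,...,a_n] in lowest terms, i.e., both a_1 divides p_n² − r_n² and a_1 divides p_{n-1} p_n − r_{n-1} r_n, and the quotients are coprime. -/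
/-- Determinant identity for continuants. -/
lemma det_eq (l : List ℕ) (hl : l ≠ []) :
    (cont l : ℤ) * contD l.dropLast - (cont l.dropLast : ℤ) * contD l
      = (-1) ^ l.length := by
  induction l with
  | nil => exact absurd rfl hl
  | cons a l ih =>
    cases l with
    | nil => simp [cont, contD]
    | cons b m =>
      have h := ih (by simp)
      have h1 : (a :: b :: m).dropLast = a :: (b :: m).dropLast := rfl
      rw [h1]
      have e1 : (cont (a :: b :: m) : ℤ)
          = (a : ℤ) * cont (b :: m) + contD (b :: m) := by
        rw [cont_cons]; push_cast; ring
      have e2 : (cont (a :: (b :: m).dropLast) : ℤ)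
          = (a : ℤ) * cont ((b :: m).dropLast) + contD ((b :: m).dropLast) := by
        rw [cont_cons]; push_cast; ring
      have e3 : (contD (a :: b :: m) : ℤ) = cont (b :: m) := rfl
      have e4 : (contD (a :: (b :: m).dropLast) : ℤ) = cont ((b :: m).dropLast) := rfl
      rw [e1, e2, e3, e4, List.length_cons, pow_succ]
      linear_combination (-1 : ℤ) * h

lemma coprime_helper (a₁ q r q' r' e : ℤ) (he : e = 1 ∨ e = -1)
    (hd : q * r' - q' * r = e) :
    IsCoprime (q * (a₁ * q + 2 * r)) (q' * (a₁ * q + r) + r' * q) := by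
  have h1 : IsCoprime q (q' * (a₁ * q + r) + r' * q) := by
    rcases he with rfl | rfl
    · exact ⟨a₁ * q' + 2 * r', -1, by linear_combination hd⟩
    · exact ⟨-(a₁ * q' + 2 * r'), 1, by linear_combination -hd⟩
  have h2 : IsCoprime (a₁ * q + 2 * r) (q' * (a₁ * q + r) + r' * q) := by
    rcases he with rfl | rfl
    · exact ⟨-q', 1, by linear_combination hd⟩
    · exact ⟨q', -1, by linear_combination -hd⟩
  exact h1.mul_left h2

/-- gcd(pₙ² − rₙ², pₙ₋₁pₙ − rₙ₋₁rₙ) = a₁, where pₙ/qₙ = [a₁,...,aₙ] and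
qₙ/rₙ = [a₂,...,aₙ]. -/
theorem stmt7 (a₁ : ℕ) (l' : List ℕ) (hl' : l' ≠ []) (ha₁ : 0 < a₁)
    (hpos : ∀ x ∈ l', 0 < x) :
    Int.gcd ((cont (a₁ :: l') : ℤ) ^ 2 - (contD l' : ℤ) ^ 2)
        ((cont ((a₁ :: l').dropLast) : ℤ) * (cont (a₁ :: l') : ℤ) -
          (contD (l'.dropLast) : ℤ) * (contD l' : ℤ)) = a₁ := by
  obtain ⟨b, m, rfl⟩ := List.exists_cons_of_ne_nil hl'
  have hd : (cont (b :: m) : ℤ) * contD (b :: m).dropLast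
      - (cont (b :: m).dropLast : ℤ) * contD (b :: m)
      = (-1) ^ (b :: m).length := det_eq _ (by simp)
  have he : ((-1 : ℤ)) ^ (b :: m).length = 1 ∨ ((-1 : ℤ)) ^ (b :: m).length = -1 := by
    rcases Nat.even_or_odd (b :: m).length with h | h
    · exact Or.inl h.neg_one_pow
    · exact Or.inr h.neg_one_pow
  have key := coprime_helper (a₁ : ℤ) (cont (b :: m)) (contD (b :: m))
    (cont ((b :: m).dropLast)) (contD ((b :: m).dropLast)) _ he hd
  have e1 : (cont (a₁ :: b :: m) : ℤ)
      = (a₁ : ℤ) * cont (b :: m) + contD (b :: m) := by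
    rw [cont_cons]; push_cast; ring
  have e2 : (cont ((a₁ :: b :: m).dropLast) : ℤ)
      = (a₁ : ℤ) * cont ((b :: m).dropLast) + contD ((b :: m).dropLast) := by
    show (cont (a₁ :: (b :: m).dropLast) : ℤ) = _
    rw [cont_cons]; push_cast; ring
  rw [e1, e2]
  have hA : ((a₁ : ℤ) * cont (b :: m) + contD (b :: m)) ^ 2 - (contD (b :: m) : ℤ) ^ 2
      = (a₁ : ℤ) * ((cont (b :: m) : ℤ)
        * ((a₁ : ℤ) * cont (b :: m) + 2 * contD (b :: m))) := by ring
  have hB : ((a₁ : ℤ) * cont ((b :: m).dropLast) + contD ((b :: m).dropLast))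
        * ((a₁ : ℤ) * cont (b :: m) + contD (b :: m))
      - (contD ((b :: m).dropLast) : ℤ) * contD (b :: m)
      = (a₁ : ℤ) * ((cont ((b :: m).dropLast) : ℤ)
          * ((a₁ : ℤ) * cont (b :: m) + contD (b :: m))
        + (contD ((b :: m).dropLast) : ℤ) * cont (b :: m)) := by ring
  rw [hA, hB, Int.gcd_mul_left, Int.isCoprime_iff_gcd_eq_one.mp key, mul_one,
    Int.natAbs_natCast]
end

section
/- Let [a_1,...,a_n] = p/q in lowest terms with a_n ≥ 2. Then [a_1,...,a_{n-1}, a_n + 1, a_n − 1, a_{n-1},...,a_1] = p² / (pq + (−1)^n). -/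
/-!
Encode `[a₁,...,aₙ]` by the product `M` of the matrices `!![aᵢ, 1; 1, 0]`: its first column is
`(p, q)` in lowest terms, since `det M = (-1)ⁿ`. The word `a₁ … aₙ₋₁ (aₙ+1) (aₙ-1) aₙ₋₁ … a₁` has
matrix `M' K M'ᵀ`, where `M'` belongs to `a₁ … aₙ₋₁` and `K = v vᵀ + J` with `v = (aₙ, 1)` and
`J = !![0, 1; -1, 0]`. As `M' v = (p, q)` and `M' J M'ᵀ = det M' • J`, the first column of this
product is `(p², pq - det M')`.
-/

open Matrix

def cfMatrix (l : List ℕ) : Matrix (Fin 2) (Fin 2) ℤ :=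
  (l.map fun a => !![(a : ℤ), 1; 1, 0]).prod

@[simp]
lemma cfMatrix_nil : cfMatrix [] = 1 := rfl

lemma cfMatrix_cons (a : ℕ) (l : List ℕ) :
    cfMatrix (a :: l) = !![(a : ℤ), 1; 1, 0] * cfMatrix l := by
  simp [cfMatrix]

lemma cfMatrix_append (l₁ l₂ : List ℕ) : cfMatrix (l₁ ++ l₂) = cfMatrix l₁ * cfMatrix l₂ := by
  simp [cfMatrix]

lemma cfMatrix_singleton (a : ℕ) : cfMatrix [a] = !![(a : ℤ), 1; 1, 0] := by
  simp [cfMatrix]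

section Entries

variable (a : ℕ) (l : List ℕ)

@[simp]
lemma cfMatrix_cons_zero_zero : cfMatrix (a :: l) 0 0 = a * cfMatrix l 0 0 + cfMatrix l 1 0 := by
  simp [cfMatrix_cons, mul_apply]

@[simp]
lemma cfMatrix_cons_zero_one : cfMatrix (a :: l) 0 1 = a * cfMatrix l 0 1 + cfMatrix l 1 1 := by
  simp [cfMatrix_cons, mul_apply]

@[simp]
lemma cfMatrix_cons_one_zero : cfMatrix (a :: l) 1 0 = cfMatrix l 0 0 := by
  simp [cfMatrix_cons, mul_apply]

@[simp]
lemma cfMatrix_cons_one_one : cfMatrix (a :: l) 1 1 = cfMatrix l 0 1 := by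
  simp [cfMatrix_cons, mul_apply]

lemma cfMatrix_append_singleton_apply (i : Fin 2) :
    cfMatrix (l ++ [a]) i 0 = cfMatrix l i 0 * a + cfMatrix l i 1 := by
  simp [cfMatrix_append, cfMatrix_singleton, mul_apply]

end Entries

lemma cfMatrix_reverse (l : List ℕ) : cfMatrix l.reverse = (cfMatrix l)ᵀ := by
  induction l with
  | nil => simp
  | cons a l ih =>
    have hsymm : (!![(a : ℤ), 1; 1, 0])ᵀ = !![(a : ℤ), 1; 1, 0] := by
      ext i j; fin_cases i <;> fin_cases j <;> rfl
    rw [List.reverse_cons, cfMatrix_append, ih, cfMatrix_singleton, cfMatrix_cons, transpose_mul,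
      hsymm]

lemma det_cfMatrix (l : List ℕ) : (cfMatrix l).det = (-1) ^ l.length := by
  induction l with
  | nil => simp
  | cons a l ih =>
    rw [cfMatrix_cons, det_mul, ih, det_fin_two_of]
    simp [pow_succ]

lemma isCoprime_cfMatrix (l : List ℕ) : IsCoprime (cfMatrix l 0 0) (cfMatrix l 1 0) := by
  have hdet := det_cfMatrix l
  rw [det_fin_two] at hdet
  rcases neg_one_pow_eq_or ℤ l.length with h | h
  · exact ⟨cfMatrix l 1 1, -cfMatrix l 0 1, by linear_combination hdet.trans h⟩
  · exact ⟨-cfMatrix l 1 1, cfMatrix l 0 1, by linear_combination -hdet.trans h⟩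

section Positive

variable {l : List ℕ} (hl : ∀ x ∈ l, 0 < x)
include hl

lemma cfMatrix_zero_zero_pos : 0 < cfMatrix l 0 0 := by
  suffices 0 < cfMatrix l 0 0 ∧ 0 ≤ cfMatrix l 0 1 ∧ 0 ≤ cfMatrix l 1 0 ∧ 0 ≤ cfMatrix l 1 1 from
    this.1
  induction l with
  | nil => simp
  | cons a l ih =>
    have ha : (0 : ℤ) < a := by exact_mod_cast hl a List.mem_cons_self
    obtain ⟨h00, h01, h10, h11⟩ := ih fun x hx => hl x (List.mem_cons_of_mem _ hx)
    simp only [cfMatrix_cons_zero_zero, cfMatrix_cons_zero_one, cfMatrix_cons_one_zero,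
      cfMatrix_cons_one_one]
    exact ⟨by positivity, by positivity, h00.le, h01⟩

lemma cfMatrix_one_zero_pos (hne : l ≠ []) : 0 < cfMatrix l 1 0 := by
  obtain ⟨a, l, rfl⟩ := List.exists_cons_of_ne_nil hne
  rw [cfMatrix_cons_one_zero]
  exact cfMatrix_zero_zero_pos fun x hx => hl x (List.mem_cons_of_mem _ hx)

end Positive

-- `(l.map fun x => (x : ℚ))` elaborates as the identity map applied to the coercion
-- `List ℕ → List ℚ` that goes through the list monad.
lemma map_natCast_coe (l : List ℕ) : (l.map fun x => (x : ℚ)) = l.map (Nat.cast : ℕ → ℚ) := by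
  simp [List.map_eq_flatMap]

lemma cfQ_cons (a : ℚ) (l : List ℚ) : cfQ (a :: l) = a + 1 / cfQ l := by
  cases l with
  | nil => simp [cfQ]
  | cons b l => rfl

lemma cfQ_eq_cfMatrix_div {l : List ℕ} (hl : ∀ x ∈ l, 0 < x) :
    cfQ (l.map (Nat.cast : ℕ → ℚ)) = (cfMatrix l 0 0 : ℚ) / cfMatrix l 1 0 := by
  induction l with
  | nil => simp [cfQ]
  | cons a l ih =>
    have hl' : ∀ x ∈ l, 0 < x := fun x hx => hl x (List.mem_cons_of_mem _ hx)
    have h00 : (cfMatrix l 0 0 : ℚ) ≠ 0 := by exact_mod_cast (cfMatrix_zero_zero_pos hl').ne'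
    rw [List.map_cons, cfQ_cons, ih hl', cfMatrix_cons_zero_zero, cfMatrix_cons_one_zero]
    field_simp
    push_cast
    ring

section LowestTerms

variable {l : List ℕ} (hl : ∀ x ∈ l, 0 < x) (hne : l ≠ [])
include hl hne

lemma num_cfQ : (cfQ (l.map (Nat.cast : ℕ → ℚ))).num = cfMatrix l 0 0 := by
  rw [cfQ_eq_cfMatrix_div hl]
  exact Rat.num_div_eq_of_coprime (cfMatrix_one_zero_pos hl hne)
    (Int.isCoprime_iff_gcd_eq_one.mp (isCoprime_cfMatrix l))

lemma den_cfQ : ((cfQ (l.map (Nat.cast : ℕ → ℚ))).den : ℤ) = cfMatrix l 1 0 := by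
  rw [cfQ_eq_cfMatrix_div hl]
  exact Rat.den_div_eq_of_coprime (cfMatrix_one_zero_pos hl hne)
    (Int.isCoprime_iff_gcd_eq_one.mp (isCoprime_cfMatrix l))

end LowestTerms

section Palindrome

variable (m : List ℕ) {a : ℕ} (ha : 1 ≤ a)
include ha

lemma cfMatrix_palindrome :
    cfMatrix (m ++ [a + 1, a - 1] ++ m.reverse) =
      cfMatrix m * !![(a : ℤ) ^ 2, a + 1; a - 1, 1] * (cfMatrix m)ᵀ := by
  have hK : !![((a + 1 : ℕ) : ℤ), 1; 1, 0] * !![((a - 1 : ℕ) : ℤ), 1; 1, 0] =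
      !![(a : ℤ) ^ 2, a + 1; a - 1, 1] := by
    rw [Nat.cast_sub ha, mul_fin_two]
    push_cast
    ring_nf
  rw [cfMatrix_append, cfMatrix_append, cfMatrix_reverse, cfMatrix_cons, cfMatrix_singleton, hK]

lemma cfMatrix_palindrome_zero_zero :
    cfMatrix (m ++ [a + 1, a - 1] ++ m.reverse) 0 0 = cfMatrix (m ++ [a]) 0 0 ^ 2 := by
  rw [cfMatrix_palindrome m ha, cfMatrix_append_singleton_apply]
  simp [mul_apply]
  ring

lemma cfMatrix_palindrome_one_zero :
    cfMatrix (m ++ [a + 1, a - 1] ++ m.reverse) 1 0 =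
      cfMatrix (m ++ [a]) 0 0 * cfMatrix (m ++ [a]) 1 0 + (-1) ^ (m.length + 1) := by
  have hdet := det_cfMatrix m
  rw [det_fin_two] at hdet
  rw [cfMatrix_palindrome m ha, cfMatrix_append_singleton_apply, cfMatrix_append_singleton_apply,
    pow_succ (-1 : ℤ), ← hdet]
  simp [mul_apply]
  ring

end Palindrome

/-- If [a₁,...,aₙ] = p/q in lowest terms with aₙ ≥ 2, then
[a₁,...,aₙ₋₁, aₙ+1, aₙ−1, aₙ₋₁,...,a₁] = p²/(pq + (−1)ⁿ). -/
theorem stmt8 (m : List ℕ) (aN : ℕ) (hpos : ∀ x ∈ m, 0 < x) (haN : 2 ≤ aN) :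
    cfQ ((m ++ [aN + 1, aN - 1] ++ m.reverse).map (fun x => (x : ℚ))) =
      ((cfQ ((m ++ [aN]).map (fun x => (x : ℚ)))).num : ℚ) ^ 2 /
        (((cfQ ((m ++ [aN]).map (fun x => (x : ℚ)))).num : ℚ) *
            ((cfQ ((m ++ [aN]).map (fun x => (x : ℚ)))).den : ℚ) +
          (-1 : ℚ) ^ (m.length + 1)) := by
  have hpos_word : ∀ x ∈ m ++ [aN], 0 < x := by
    simp only [List.mem_append, List.mem_singleton]
    rintro x (hx | rfl)
    exacts [hpos x hx, by omega]
  have hpos_palindrome : ∀ x ∈ m ++ [aN + 1, aN - 1] ++ m.reverse, 0 < x := by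
    simp only [List.mem_append, List.mem_cons, List.mem_reverse, List.not_mem_nil, or_false]
    rintro x ((hx | rfl | rfl) | hx)
    exacts [hpos x hx, by omega, by omega, hpos x hx]
  have hne : m ++ [aN] ≠ [] := by simp
  have hden : ((cfQ ((m ++ [aN]).map (Nat.cast : ℕ → ℚ))).den : ℚ) = cfMatrix (m ++ [aN]) 1 0 := by
    exact_mod_cast den_cfQ hpos_word hne
  simp only [map_natCast_coe]
  rw [cfQ_eq_cfMatrix_div hpos_palindrome, cfMatrix_palindrome_zero_zero m (by omega),
    cfMatrix_palindrome_one_zero m (by omega), num_cfQ hpos_word hne, hden]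
  push_cast
  ring
end

section
/- If p and q are relatively prime positive integers with p > q and both p and q are odd, then p/q has no even continued fraction expansion, i.e., there is no sequence of nonzero even integers b_1,...,b_m with [b_1,...,b_m] = p/q. -/
def IsQuotientOfOdds (r : ℚ) : Prop :=
  ∃ u v : ℤ, Odd u ∧ Odd v ∧ r = u / v

lemma not_isQuotientOfOdds_of_even {a : ℤ} (ha : Even a) : ¬ IsQuotientOfOdds a := by
  rintro ⟨u, v, hu, hv, hauv⟩
  have hv0 : (v : ℚ) ≠ 0 := Int.cast_ne_zero.mpr (by rintro rfl; simp at hv)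
  have hu_eq : u = a * v := by
    rw [eq_div_iff hv0] at hauv
    exact_mod_cast hauv.symm
  exact Int.not_even_iff_odd.mpr hu (hu_eq ▸ ha.mul_right v)

lemma IsQuotientOfOdds.of_add_inv {a : ℤ} (ha : Even a) {r : ℚ}
    (h : IsQuotientOfOdds (a + r⁻¹)) : IsQuotientOfOdds r := by
  obtain ⟨u, v, hu, hv, huv⟩ := h
  have hv0 : (v : ℚ) ≠ 0 := Int.cast_ne_zero.mpr (by rintro rfl; simp at hv)
  have hinv : r⁻¹ = ((u - a * v : ℤ) : ℚ) / v := by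
    push_cast
    rw [sub_div, mul_div_cancel_right₀ _ hv0, ← huv]
    ring
  exact ⟨v, u - a * v, hv, hu.sub_even (ha.mul_right v), by rw [← inv_inv r, hinv, inv_div]⟩

lemma not_isQuotientOfOdds_cfQ :
    ∀ b : List ℤ, (∀ x ∈ b, Even x) → ¬ IsQuotientOfOdds (cfQ (b.map (fun x => (x : ℚ))))
  | [], _ => by simpa [cfQ] using not_isQuotientOfOdds_of_even Even.zero
  | [a], hb => not_isQuotientOfOdds_of_even (hb a (by simp))
  | a :: c :: l, hb => fun h =>
      not_isQuotientOfOdds_cfQ (c :: l) (fun x hx => hb x (List.mem_cons_of_mem a hx))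
        (IsQuotientOfOdds.of_add_inv (hb a (by simp)) (by rwa [← one_div]))

theorem stmt12_general (p q : ℕ) (hp : Odd p) (hq' : Odd q) :
    ¬ ∃ b : List ℤ, b ≠ [] ∧ (∀ x ∈ b, x ≠ 0 ∧ Even x) ∧
      (∀ t : List ℤ, t ≠ [] → t <:+ b → cfQ (t.map (fun x => (x : ℚ))) ≠ 0) ∧
      cfQ (b.map (fun x => (x : ℚ))) = (p : ℚ) / (q : ℚ) := by
  rintro ⟨b, -, hb, -, hval⟩
  exact not_isQuotientOfOdds_cfQ b (fun x hx => (hb x hx).2)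
    ⟨p, q, hp.natCast, hq'.natCast, by rw [hval]; push_cast; rfl⟩

/-- If p, q are relatively prime positive integers, p > q, and both p and q
are odd, then p/q has no even continued fraction expansion. -/
theorem stmt12 (p q : ℕ) (hq : 0 < q) (hpq : q < p) (hcop : Nat.Coprime p q)
    (hp : Odd p) (hq' : Odd q) :
    ¬ ∃ b : List ℤ, b ≠ [] ∧ (∀ x ∈ b, x ≠ 0 ∧ Even x) ∧
      (∀ t : List ℤ, t ≠ [] → t <:+ b → cfQ (t.map (fun x => (x : ℚ))) ≠ 0) ∧
      cfQ (b.map (fun x => (x : ℚ))) = (p : ℚ) / (q : ℚ) :=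
  stmt12_general p q hp hq'
end

section
/- Every Markov number m > 2 is a sum of two relatively prime squares: there exist positive integers a < b with gcd(a,b) = 1 and m = a² + b². -/
/-!
In a Markov triple `(m, y, z)` the entries are pairwise coprime: Vieta jumping
`(x, y, z) ↦ (x, y, 3xy - z)` lowers the largest entry while keeping every common divisor of
the three, until an entry equals `1`. Since `m ∣ y² + z²` and `z` is invertible modulo `m`,
`s = y z⁻¹` satisfies `m ∣ s² + 1`.

Whenever `n ∣ s² + 1`, one finds `n = a² + b²` with `a ≡ s b (mod n)`, by strong induction on
`n`: reduce `s` modulo `n`, write `s² + 1 = n k` with `k < n`, take the representation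
`k = c² + d²` attached to `s`, and divide `s + i` by `c + d i` in `ℤ[i]`. The congruence
`a ≡ s b` forces `a` and `b` to be coprime.
-/

/-- The quotient `(s + i) / (c + d i) = ((s c + d) + (c - s d) i) / k` has integral coordinates
because `c ≡ s d (mod k)`. -/
theorem Int.exists_sq_add_sq_dvd_sub_mul_of_mul_eq {n k s c d : ℤ} (hk : k ≠ 0)
    (hsk : s ^ 2 + 1 = n * k) (hcd : k = c ^ 2 + d ^ 2) (hk_dvd : k ∣ c - s * d) :
    ∃ a b : ℤ, n = a ^ 2 + b ^ 2 ∧ n ∣ a - s * b := by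
  obtain ⟨b, hb⟩ := hk_dvd
  have ha : s * c + d = k * (s * b + d * n) := by linear_combination s * hb + d * hsk
  refine ⟨s * b + d * n, b, mul_left_cancel₀ (pow_ne_zero 2 hk) ?_, ⟨d, by ring⟩⟩
  linear_combination (s * c + d + k * (s * b + d * n)) * ha + (c - s * d + k * b) * hb
    - k * hsk + (s ^ 2 + 1) * hcd

theorem Int.exists_sq_add_sq_dvd_sub_mul (n : ℕ) (s : ℤ) (h : (n : ℤ) ∣ s ^ 2 + 1) :
    ∃ a b : ℤ, n = a ^ 2 + b ^ 2 ∧ (n : ℤ) ∣ a - s * b := by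
  induction n using Nat.strong_induction_on generalizing s with
  | _ n ih =>
  obtain hn | rfl | hn : n = 0 ∨ n = 1 ∨ 2 ≤ n := by omega
  · subst hn
    rw [Nat.cast_zero, zero_dvd_iff] at h
    exact absurd h (by positivity)
  · exact ⟨1, 0, by norm_num, one_dvd _⟩
  -- Replacing `s` by `s % n` makes the cofactor `k` in `s² + 1 = n k` smaller than `n`.
  set r := s % n
  have hr0 : 0 ≤ r := Int.emod_nonneg s (by omega)
  have hrn : r < n := Int.emod_lt_of_pos s (by omega)
  have hsr : (n : ℤ) ∣ s - r := (Int.mod_modEq s n).dvd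
  obtain ⟨k, hk⟩ : (n : ℤ) ∣ r ^ 2 + 1 := by
    rw [show r ^ 2 + 1 = s ^ 2 + 1 - (s - r) * (s + r) by ring]
    exact dvd_sub h (hsr.mul_right _)
  have hk0 : 0 < k := pos_of_mul_pos_right (a := (n : ℤ)) (hk ▸ by positivity) (by positivity)
  have hkn : k < n := by nlinarith
  lift k to ℕ using hk0.le
  obtain ⟨c, d, hcd, hk_dvd⟩ := ih k (by exact_mod_cast hkn) r (Dvd.intro_left _ hk.symm)
  obtain ⟨a, b, hab, hn_dvd⟩ :=
    Int.exists_sq_add_sq_dvd_sub_mul_of_mul_eq (by positivity) hk hcd hk_dvd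
  refine ⟨a, b, hab, ?_⟩
  rw [show a - s * b = a - r * b - (s - r) * b by ring]
  exact dvd_sub hn_dvd (hsr.mul_right b)

/-- The Bézout relation `t a + (t s + k b) b = 1`, with `a - s b = n t` and `s² + 1 = n k`,
comes from `(a - s b)(a + s b) = n (1 - k b²)`. -/
theorem Int.isCoprime_of_sq_add_sq_of_dvd_sub_mul {n s a b : ℤ} (hs : n ∣ s ^ 2 + 1)
    (hab : n = a ^ 2 + b ^ 2) (hn_dvd : n ∣ a - s * b) : IsCoprime a b := by
  obtain ⟨k, hk⟩ := hs
  have hn : n ≠ 0 := by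
    rintro rfl
    linarith [sq_nonneg s]
  obtain ⟨t, ht⟩ := hn_dvd
  refine ⟨t, t * s + k * b, mul_left_cancel₀ hn ?_⟩
  linear_combination -(a + s * b) * ht - b ^ 2 * hk - hab

theorem Nat.exists_coprime_sq_add_sq_of_dvd_sq_add_one {n : ℕ} {s : ℤ}
    (h : (n : ℤ) ∣ s ^ 2 + 1) : ∃ a b : ℕ, a.Coprime b ∧ n = a ^ 2 + b ^ 2 := by
  obtain ⟨a, b, hab, hn_dvd⟩ := Int.exists_sq_add_sq_dvd_sub_mul n s h
  refine ⟨a.natAbs, b.natAbs, ?_, ?_⟩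
  · exact Int.isCoprime_iff_gcd_eq_one.mp (Int.isCoprime_of_sq_add_sq_of_dvd_sub_mul h hab hn_dvd)
  · zify
    simpa only [sq_abs] using hab

def IsMarkovTriple (x y z : ℕ) : Prop :=
  0 < x ∧ 0 < y ∧ 0 < z ∧ x ^ 2 + y ^ 2 + z ^ 2 = 3 * x * y * z

namespace IsMarkovTriple

variable {x y z : ℕ}

theorem rotate (h : IsMarkovTriple x y z) : IsMarkovTriple y z x := by
  obtain ⟨hx, hy, hz, h⟩ := h
  exact ⟨hy, hz, hx, by linear_combination h⟩

/-- Vieta jumping: `z` and `w = 3xy - z` are the two roots of `t² - 3xy t + x² + y² = 0`, and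
`w < z` because `x² + y² < (xy)² ≤ z²` once `x, y ≥ 2`. -/
theorem exists_lt_of_two_le (h : IsMarkovTriple x y z) (hx : 2 ≤ x) (hy : 2 ≤ y)
    (hxz : x ≤ z) (hyz : y ≤ z) : ∃ w < z, IsMarkovTriple x y w ∧ w + z = 3 * x * y := by
  obtain ⟨-, -, hz, h⟩ := h
  have hxy : x * y ≤ z := by
    have : 3 * (x * y) * z ≤ 3 * z * z := by nlinarith
    have := Nat.le_of_mul_le_mul_right this hz
    omega
  have hz3 : z ≤ 3 * x * y := Nat.le_of_mul_le_mul_right (by nlinarith) hz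
  obtain ⟨w, hw⟩ : ∃ w, w + z = 3 * x * y := ⟨3 * x * y - z, by omega⟩
  have hwz : w * z = x ^ 2 + y ^ 2 := by
    have : w * z + z ^ 2 = 3 * x * y * z := by rw [← hw]; ring
    linarith
  have hsq : x ^ 2 + y ^ 2 < z ^ 2 := by nlinarith [Nat.mul_le_mul hxy hxy]
  have hwz_lt : w < z := Nat.lt_of_mul_lt_mul_right (a := z) (by nlinarith)
  refine ⟨w, hwz_lt, ⟨by omega, by omega, ?_, ?_⟩, hw⟩
  · exact pos_of_mul_pos_left (a := w) (by rw [hwz]; positivity) hz.le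
  · calc x ^ 2 + y ^ 2 + w ^ 2 = w * (w + z) := by rw [← hwz]; ring
      _ = 3 * x * y * w := by rw [hw]; ring

theorem eq_one_of_dvd {d : ℕ} (h : IsMarkovTriple x y z) (hx : d ∣ x) (hy : d ∣ y)
    (hz : d ∣ z) : d = 1 := by
  induction hn : x + y + z using Nat.strong_induction_on generalizing x y z with
  | _ n ih =>
  wlog hmax : x ≤ z ∧ y ≤ z generalizing x y z
  · rcases le_total x y with hxy | hyx
    · exact this h.rotate.rotate hz hx hy (by omega) (by omega)
    · exact this h.rotate hy hz hx (by omega) (by omega)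
  by_cases h1 : x = 1 ∨ y = 1
  · rcases h1 with rfl | rfl
    · exact Nat.dvd_one.mp hx
    · exact Nat.dvd_one.mp hy
  have hx0 : 0 < x := h.1
  have hy0 : 0 < y := h.2.1
  obtain ⟨w, hwz, hw, hwxy⟩ := h.exists_lt_of_two_le (by omega) (by omega) hmax.1 hmax.2
  have hdw : d ∣ w := (Nat.dvd_add_left hz).mp (hwxy ▸ (hx.mul_left 3).mul_right y)
  exact ih (x + y + w) (by omega) hw hx hy hdw rfl

theorem coprime (h : IsMarkovTriple x y z) : x.Coprime y := by
  refine Nat.coprime_of_dvd fun p hp hpx hpy ↦ hp.one_lt.ne' (h.eq_one_of_dvd hpx hpy ?_)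
  have hpxy : p ∣ x ^ 2 + y ^ 2 := dvd_add (dvd_pow hpx two_ne_zero) (dvd_pow hpy two_ne_zero)
  have hpxyz : p ∣ x ^ 2 + y ^ 2 + z ^ 2 := h.2.2.2 ▸ ((hpx.mul_left 3).mul_right y).mul_right z
  exact hp.dvd_of_dvd_pow ((Nat.dvd_add_right hpxy).mp hpxyz)

theorem exists_dvd_sq_add_one (h : IsMarkovTriple x y z) :
    ∃ s : ℤ, (x : ℤ) ∣ s ^ 2 + 1 := by
  -- `s = y u` with `u = z⁻¹ (mod x)`
  obtain ⟨u, v, huv⟩ := Nat.isCoprime_iff_coprime.mpr h.rotate.rotate.coprime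
  have hM : (x : ℤ) ^ 2 + y ^ 2 + z ^ 2 = 3 * x * y * z := by exact_mod_cast h.2.2.2
  exact ⟨y * u, u ^ 2 * (3 * y * z - x) + v * (1 + u * z),
    by linear_combination u ^ 2 * hM - (1 + u * z) * huv⟩

end IsMarkovTriple

theorem Nat.exists_pos_lt_coprime_sq_add_sq {n a b : ℕ} (hab : a.Coprime b)
    (hn : n = a ^ 2 + b ^ 2) (h2 : 2 < n) :
    ∃ a b : ℕ, 0 < a ∧ a < b ∧ Nat.gcd a b = 1 ∧ n = a ^ 2 + b ^ 2 := by
  wlog hle : a ≤ b generalizing a b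
  · exact this hab.symm (by rw [hn, add_comm]) (by omega)
  have ha : 0 < a := by
    refine Nat.pos_of_ne_zero ?_
    rintro rfl
    rw [Nat.coprime_zero_left] at hab
    subst hab
    omega
  have hlt : a < b := by
    refine lt_of_le_of_ne hle ?_
    rintro rfl
    rw [Nat.coprime_self] at hab
    subst hab
    omega
  exact ⟨a, b, ha, hlt, hab, hn⟩

/-- Every Markov number m > 2 is a sum of two relatively prime squares. -/
theorem stmt16 (m y z : ℕ) (hm : 2 < m) (hy : 0 < y) (hz : 0 < z)
    (h : m ^ 2 + y ^ 2 + z ^ 2 = 3 * m * y * z) :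
    ∃ a b : ℕ, 0 < a ∧ a < b ∧ Nat.gcd a b = 1 ∧ m = a ^ 2 + b ^ 2 := by
  have hM : IsMarkovTriple m y z := ⟨by omega, hy, hz, h⟩
  obtain ⟨s, hs⟩ := hM.exists_dvd_sq_add_one
  obtain ⟨a, b, hab, hm_eq⟩ := Nat.exists_coprime_sq_add_sq_of_dvd_sq_add_one hs
  exact Nat.exists_pos_lt_coprime_sq_add_sq hab hm_eq hm
end

section
/- For the line segment from (0,0) to (q,p) with gcd(p,q) = 1 and 0 < p < q, define v_i = ⌊iq/p⌋ − (v_1 + ... + v_{i-1}) for 1 ≤ i ≤ p−1 (so v_1 = ⌊q/p⌋) and v_p = q − 1 − (v_1 + ... + v_{p-1}). Then v_1 + v_2 + ... + v_p = q − 1 and |v_i − v_j| ≤ 1 for all i, j. -/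
/-- With v₁ = ⌊q/p⌋, vᵢ = ⌊iq/p⌋ − (v₁ + ⋯ + vᵢ₋₁) for 2 ≤ i ≤ p−1, and
vₚ = q − 1 − (v₁ + ⋯ + vₚ₋₁), we have v₁ + ⋯ + vₚ = q − 1 and
|vᵢ − vⱼ| ≤ 1 for all i, j. -/
theorem stmt17 (p q : ℕ) (v : ℕ → ℕ) (hp : 0 < p) (hpq : p < q)
    (hcop : Nat.Coprime p q)
    (h1 : 1 < p → v 1 = q / p)
    (hmid : ∀ i, 2 ≤ i → i ≤ p - 1 → v i = i * q / p - ∑ j ∈ Finset.Icc 1 (i - 1), v j)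
    (hlast : v p = q - 1 - ∑ j ∈ Finset.Icc 1 (p - 1), v j) :
    (∑ j ∈ Finset.Icc 1 p, v j) = q - 1 ∧
    ∀ i ∈ Finset.Icc 1 p, ∀ j ∈ Finset.Icc 1 p, |(v i : ℤ) - (v j : ℤ)| ≤ 1 := by
  by_cases hp1 : p = 1
  · subst hp1
    simp only [show (1:ℕ) - 1 = 0 from rfl] at hlast
    rw [show Finset.Icc 1 0 = (∅ : Finset ℕ) by rfl] at hlast
    simp at hlast
    constructor
    · simp [hlast]
    · intro i hi j hj
      simp only [Finset.mem_Icc] at hi hj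
      have hij : i = 1 := by omega
      have hj1 : j = 1 := by omega
      subst hij; subst hj1
      simp
  · have hp2 : 2 ≤ p := by omega
    have hq0 : 0 < q := by omega
    have hr0 : 0 < q % p := by
      rcases Nat.eq_zero_or_pos (q % p) with h | h
      · exfalso
        have hd : p ∣ q := Nat.dvd_of_mod_eq_zero h
        have := Nat.Coprime.eq_one_of_dvd hcop hd
        omega
      · exact h
    have hrlt : q % p < p := Nat.mod_lt q (by omega)
    have hq := Nat.div_add_mod q p
    have hdlt : q / p < q := Nat.div_lt_self hq0 (by omega)
    -- partial sums equal floors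
    have key : ∀ i, 1 ≤ i → i ≤ p - 1 → ∑ j ∈ Finset.Icc 1 i, v j = i * q / p := by
      intro i
      induction i with
      | zero => omega
      | succ n ih =>
        intro _ hle
        rcases Nat.eq_zero_or_pos n with hn | hn
        · subst hn
          simpa using h1 (by omega)
        · have hs := ih hn (by omega)
          rw [Finset.sum_Icc_succ_top (by omega : 1 ≤ n + 1)]
          have hv := hmid (n+1) (by omega) hle
          simp only [Nat.add_sub_cancel] at hv
          have hmono : n * q / p ≤ (n+1) * q / p :=
            Nat.div_le_div_right (Nat.mul_le_mul_right _ (by omega))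
          rw [hv, hs]
          omega
    have hsum_pm1 : ∑ j ∈ Finset.Icc 1 (p-1), v j = (p-1) * q / p :=
      key (p-1) (by omega) le_rfl
    have hdiv : (p-1) * q / p = q - q/p - 1 := by
      have heq : (p-1) * q = p * (q - q/p - 1) + (p - q % p) := by
        have h1' : q / p + 1 ≤ q := by omega
        have h2' : q % p ≤ p := le_of_lt hrlt
        have h3' : q / p ≤ q := le_of_lt hdlt
        have h4' : 1 ≤ q - q / p := by omega
        zify [h2', h3', h4', show 1 ≤ p by omega]
        have hq' : (p : ℤ) * ((q / p : ℕ) : ℤ) + ((q % p : ℕ) : ℤ) = (q : ℤ) := by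
          exact_mod_cast hq
        push_cast at hq'
        linear_combination hq'
      rw [heq, Nat.mul_add_div (by omega : 0 < p), Nat.div_eq_of_lt (by omega : p - q % p < p)]
      omega
    have hvp : v p = q / p := by
      rw [hlast, hsum_pm1, hdiv]
      omega
    have htot : ∑ j ∈ Finset.Icc 1 p, v j = q - 1 := by
      have hps : p - 1 + 1 = p := by omega
      rw [← hps, Finset.sum_Icc_succ_top (by omega : 1 ≤ p - 1 + 1), hsum_pm1, hdiv, hps, hvp]
      omega
    refine ⟨htot, ?_⟩
    have hbound : ∀ i ∈ Finset.Icc 1 p, q / p ≤ v i ∧ v i ≤ q / p + 1 := by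
      intro i hi
      simp only [Finset.mem_Icc] at hi
      rcases eq_or_ne i 1 with rfl | hi1
      · rw [h1 (by omega)]; omega
      rcases eq_or_ne i p with rfl | hip
      · rw [hvp]; omega
      · have h2i : 2 ≤ i := by omega
        have hile : i ≤ p - 1 := by omega
        have hv := hmid i h2i hile
        rw [key (i-1) (by omega) (by omega)] at hv
        have hsplit := Nat.add_div (a := (i-1)*q) (b := q) (show 0 < p by omega)
        have hiq : (i-1)*q + q = i*q := by
          have hi1' : i - 1 + 1 = i := by omega
          calc (i-1)*q + q = ((i-1)+1)*q := by ring
            _ = i*q := by rw [hi1']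
        rw [hiq] at hsplit
        rw [hv, hsplit]
        have hmono : (i-1) * q / p ≤ i * q / p :=
          Nat.div_le_div_right (Nat.mul_le_mul_right _ (by omega))
        split at hsplit <;> split <;> omega
    intro i hi j hj
    have hbi := hbound i hi
    have hbj := hbound j hj
    rw [abs_sub_le_iff]
    constructor <;> omega
end

section
/- With v_i defined by v_1 = ⌊q/p⌋, v_i = ⌊iq/p⌋ − (v_1 + ... + v_{i-1}) for 2 ≤ i ≤ p−1, and v_p = q − 1 − (v_1 + ... + v_{p-1}), where 0 < p < q and gcd(p,q) = 1, the sequence is palindromic: v_i = v_{p+1−i} for all 1 ≤ i ≤ p. -/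
/-!
Write `S i = v₁ + ⋯ + vᵢ`. The defining relations say exactly that `S i = ⌊iq/p⌋` for
`i < p` and `S p = q - 1`. Since `p ∤ kq` for `0 < k < p`, the two floors `⌊kq/p⌋` and
`⌊(p-k)q/p⌋` of numbers summing to `q` add up to `q - 1`; hence `S i + S (p - i) = q - 1` for
all `i ≤ p`, and differencing this identity at `i` and `i - 1` gives `vᵢ = v_{p+1-i}`.
-/

open Finset

theorem Nat.mul_div_add_sub_mul_div_add_one_of_coprime {p q k : ℕ} (hcop : p.Coprime q)
    (hk0 : 0 < k) (hkp : k < p) : k * q / p + (p - k) * q / p + 1 = q := by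
  have hsum : k * q + (p - k) * q = p * q := by
    rw [← add_mul, Nat.add_sub_cancel' hkp.le]
  have hndvd : ¬p ∣ k * q := fun h =>
    absurd (Nat.le_of_dvd hk0 (hcop.dvd_of_dvd_mul_right h)) (not_le.mpr hkp)
  have hle : p ≤ k * q % p + (p - k) * q % p :=
    Nat.le_mod_add_mod_of_dvd_add_of_not_dvd (hsum ▸ dvd_mul_right p q) hndvd
  rw [← Nat.add_div_eq_of_le_mod_add_mod hle (hk0.trans hkp), hsum,
    Nat.mul_div_cancel_left q (hk0.trans hkp)]

theorem Nat.apply_add_apply_sub_add_one_eq_of_eq_mul_div {S : ℕ → ℕ} {p q : ℕ} (hp : 0 < p)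
    (hcop : p.Coprime q) (hS : ∀ i < p, S i = i * q / p) (hSp : S p + 1 = q) :
    ∀ i ≤ p, S i + S (p - i) + 1 = q := by
  intro i hip
  rcases Nat.eq_zero_or_pos i with rfl | hi0
  · rw [hS 0 hp, Nat.sub_zero, Nat.zero_mul, Nat.zero_div, Nat.zero_add, hSp]
  obtain hi | rfl := hip.lt_or_eq
  · rw [hS i hi, hS (p - i) (by omega)]
    exact mul_div_add_sub_mul_div_add_one_of_coprime hcop hi0 hi
  · rw [Nat.sub_self, hS 0 hi0, Nat.zero_mul, Nat.zero_div, Nat.add_zero, hSp]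

theorem Finset.sum_Icc_eq_of_eq_sub_sum_Icc {v g : ℕ → ℕ} {n : ℕ} (hg : Monotone g)
    (hg0 : g 0 = 0) (hv : ∀ i, 1 ≤ i → i ≤ n → v i = g i - ∑ j ∈ Icc 1 (i - 1), v j) :
    ∀ i ≤ n, ∑ j ∈ Icc 1 i, v j = g i := by
  intro i
  induction i with
  | zero => simp [hg0]
  | succ i ih =>
    intro hin
    have hsum := ih (by omega)
    have hvi := hv (i + 1) (by omega) hin
    have hmono := hg (Nat.le_add_right i 1)
    rw [Nat.add_sub_cancel, hsum] at hvi
    rw [sum_Icc_succ_top (by omega), hsum, hvi]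
    omega

theorem Finset.palindrome_of_sum_Icc_add_sum_Icc_eq {M : Type*} [AddCancelCommMonoid M]
    {v : ℕ → M} {n : ℕ} {c : M}
    (h : ∀ i ≤ n, ∑ j ∈ Icc 1 i, v j + ∑ j ∈ Icc 1 (n - i), v j = c) :
    ∀ i, 1 ≤ i → i ≤ n → v i = v (n + 1 - i) := by
  intro i hi hin
  obtain ⟨k, rfl⟩ : ∃ k, i = k + 1 := ⟨i - 1, by omega⟩
  obtain ⟨m, rfl⟩ : ∃ m, n = k + 1 + m := ⟨n - (k + 1), by omega⟩
  have hk := h k (by omega)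
  have hk1 := h (k + 1) (by omega)
  rw [show k + 1 + m - k = m + 1 by omega, sum_Icc_succ_top (by omega)] at hk
  rw [show k + 1 + m - (k + 1) = m by omega, sum_Icc_succ_top (by omega)] at hk1
  rw [show k + 1 + m + 1 - (k + 1) = m + 1 by omega]
  rw [← hk1, add_right_comm, add_assoc] at hk
  exact (add_left_cancel (add_left_cancel hk)).symm

theorem stmt18_general (p q : ℕ) (v : ℕ → ℕ) (hpq : p < q)
    (hcop : Nat.Coprime p q)
    (h1 : 1 < p → v 1 = q / p)
    (hmid : ∀ i, 2 ≤ i → i ≤ p - 1 → v i = i * q / p - ∑ j ∈ Finset.Icc 1 (i - 1), v j)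
    (hlast : v p = q - 1 - ∑ j ∈ Finset.Icc 1 (p - 1), v j) :
    ∀ i, 1 ≤ i → i ≤ p → v i = v (p + 1 - i) := by
  intro i hi hip
  have hv : ∀ i, 1 ≤ i → i ≤ p - 1 → v i = i * q / p - ∑ j ∈ Icc 1 (i - 1), v j := by
    intro i hi hip
    obtain rfl | hi2 := hi.eq_or_lt
    · simp [h1 (by omega)]
    · exact hmid i hi2 hip
  have hS : ∀ i ≤ p - 1, ∑ j ∈ Icc 1 i, v j = i * q / p :=
    sum_Icc_eq_of_eq_sub_sum_Icc (fun _ _ h => Nat.div_le_div_right (Nat.mul_le_mul_right q h))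
      (by simp) hv
  have hSp : ∑ j ∈ Icc 1 p, v j + 1 = q := by
    have hlt : (p - 1) * q / p < q :=
      Nat.div_lt_of_lt_mul (Nat.mul_lt_mul_of_pos_right (by omega) (by omega))
    have hp1 : 1 ≤ p := by omega
    rw [← Nat.sub_add_cancel hp1, sum_Icc_succ_top (by omega), Nat.sub_add_cancel hp1, hlast,
      hS (p - 1) le_rfl]
    omega
  have hsymm := Nat.apply_add_apply_sub_add_one_eq_of_eq_mul_div (S := fun i => ∑ j ∈ Icc 1 i, v j)
    (by omega) hcop (fun i hi => hS i (by omega)) hSp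
  exact palindrome_of_sum_Icc_add_sum_Icc_eq (c := q - 1)
    (fun k hk => by have := hsymm k hk; omega) i hi hip

/-- With v₁ = ⌊q/p⌋, vᵢ = ⌊iq/p⌋ − (v₁ + ⋯ + vᵢ₋₁) for 2 ≤ i ≤ p−1, and
vₚ = q − 1 − (v₁ + ⋯ + vₚ₋₁), the sequence is palindromic: vᵢ = v_{p+1−i}. -/
theorem stmt18 (p q : ℕ) (v : ℕ → ℕ) (hp : 0 < p) (hpq : p < q)
    (hcop : Nat.Coprime p q)
    (h1 : 1 < p → v 1 = q / p)
    (hmid : ∀ i, 2 ≤ i → i ≤ p - 1 → v i = i * q / p - ∑ j ∈ Finset.Icc 1 (i - 1), v j)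
    (hlast : v p = q - 1 - ∑ j ∈ Finset.Icc 1 (p - 1), v j) :
    ∀ i, 1 ≤ i → i ≤ p → v i = v (p + 1 - i) :=
  stmt18_general p q v hpq hcop h1 hmid hlast
end
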